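/- arXiv:1503.05242 — 6 statements merged into one kernel-verified Lean document; each statement's English description precedes it below -/
import Mathlib

section
/- Convolution formula for partial Bell polynomials (Lemma from [BGW12, Corollary 11]): Let x : ℕ → ℚ be a sequence and let B(n,k) := (n!/k!)·∑ x_{m_1}/m_1! ··· x_{m_k}/m_k!, the sum over all k-tuples (m_1,…,m_k) of positive integers with m_1+⋯+m_k = n (so B(n,k) is the partial Bell polynomial B_{n,k}(x_1,x_2,…)). Fix n, k ∈ ℕ, τ ∈ ℚ, and an affine function α(ℓ,m) = α₀ + α₁ℓ + α₂m with α₀, α₁, α₂ ∈ ℚ of total degree at most one in ℓ and m. Assume α(ℓ,m) ≠ 0 and τ − α(ℓ,m) ≠ 0 for all 0 ≤ ℓ ≤ k and ℓ ≤ m ≤ n. Then ∑_{ℓ=0}^{k} ∑_{m=ℓ}^{n} [τ·C(α(ℓ,m), k−ℓ)·C(τ−α(ℓ,m), ℓ)·C(n,m)] / [α(ℓ,m)·(τ−α(ℓ,m))·C(k,ℓ)] · B(m,ℓ)·B(n−m,k−ℓ) = [(τ − α(0,0) + α(k,n)) / (α(k,n)·(τ − α(0,0)))]·C(τ,k)·B(n,k).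 -/
/-!
Expanding both Bell polynomials, every summand on the left becomes `n!/k!²` times a sum over the
compositions `f` of `n` into `k` positive parts and the `ℓ`-subsets `S` of the parts (those that
make up `B(m, ℓ)`), with a weight depending only on
`a_S = α(|S|, Σ_{i ∈ S} f i) = α₀ + Σ_{i ∈ S} (α₁ + α₂ f i)`. Exchanging the sums, it remains to
evaluate, for each fixed `f`, a sum over all subsets `S`. Writing
`τ / (a (τ - a)) = 1/a + 1/(τ - a)` splits it into a Hurwitz–Abel type identity for falling
factorials, `Σ_S a_S^(k-|S|) (τ - a_S)^(|S|) / a_S = τ^(k) / a_univ`, and its mirror image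
under `S ↦ Sᶜ`.
That identity is proved by induction on the index set after shifting the second falling factorial
by `j`: the shifted sum is `τ^(|s|+j) / a_s` plus a polynomial in `A = α₀` of degree `< j`, since
the induction step only adds multiples of such polynomials and forward differences
`q(A + b) - q(A)`, which lower the degree.
-/

/-- Generalized binomial coefficient `C(z, j) = z(z-1)⋯(z-j+1)/j!` for `z : ℚ`. -/
def gchoose (z : ℚ) (j : ℕ) : ℚ :=
  (∏ i ∈ Finset.range j, (z - i)) / (j.factorial : ℚ)

/-- Partial Bell polynomial `B_{n,k}(x_1, x_2, …)` expressed as a weighted sum over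
compositions of `n` into `k` positive parts. -/
def bellB (x : ℕ → ℚ) (n k : ℕ) : ℚ :=
  ((n.factorial : ℚ) / (k.factorial : ℚ)) *
    ∑ f ∈ (Finset.Nat.antidiagonalTuple k n).filter (fun f => ∀ i, 0 < f i),
      ∏ i, x (f i) / ((f i).factorial : ℚ)

open Finset Polynomial

namespace Polynomial

variable {R : Type*} [Semiring R] {p q : R[X]} {j : ℕ}

lemma mem_degreeLT_of_degree_lt (hqp : q.degree < p.degree) (hp : p ∈ degreeLT R (j + 1)) :
    q ∈ degreeLT R j := by
  rw [mem_degreeLT] at hp ⊢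
  exact hqp.trans_le (Order.le_of_lt_succ (by exact_mod_cast hp))

lemma divX_mem_degreeLT (hp : p ∈ degreeLT R (j + 1)) : divX p ∈ degreeLT R j := by
  rcases eq_or_ne p 0 with rfl | hp0
  · simp
  · exact mem_degreeLT_of_degree_lt (degree_divX_lt hp0) hp

lemma taylor_sub_self_mem_degreeLT {R : Type*} [CommRing R] {p : R[X]} {j : ℕ} (r : R)
    (hp : p ∈ degreeLT R (j + 1)) : taylor r p - p ∈ degreeLT R j := by
  rcases eq_or_ne p 0 with rfl | hp0
  · simp
  · refine mem_degreeLT_of_degree_lt ?_ hp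
    simpa only [degree_taylor] using degree_sub_lt_left (degree_taylor p r)
      ((taylor_eq_zero r p).not.2 hp0) (leadingCoeff_taylor r p)

end Polynomial

section Abel

variable {K ι : Type*} [Field K]

noncomputable def abelSum (τ A : K) (b : ι → K) (s : Finset ι) (j : ℕ) : K :=
  ∑ S ∈ s.powerset, (descPochhammer K (#s - #S)).eval (A + ∑ i ∈ S, b i) *
    (descPochhammer K (#S + j)).eval (τ - (A + ∑ i ∈ S, b i)) / (A + ∑ i ∈ S, b i)

lemma abelSum_empty (τ A : K) (b : ι → K) (j : ℕ) :
    abelSum τ A b ∅ j = (descPochhammer K j).eval (τ - A) / A := by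
  simp [abelSum]

lemma abelSum_insert [DecidableEq ι] (τ A : K) (b : ι → K) {s : Finset ι} {a : ι} (ha : a ∉ s)
    (j : ℕ) :
    abelSum τ A b (insert a s) j = (τ - (#s + j)) * abelSum τ A b s j
      - abelSum τ A b s (j + 1) + abelSum τ (A + b a) b s (j + 1) := by
  rw [abelSum, sum_powerset_insert ha, abelSum, abelSum, abelSum, mul_sum, ← sum_sub_distrib]
  congr 1
  · refine sum_congr rfl fun S hS => ?_
    have hSs : #S ≤ #s := card_le_card (mem_powerset.mp hS)
    rw [card_insert_of_notMem ha, Nat.sub_add_comm hSs, descPochhammer_succ_eval,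
      ← add_assoc, descPochhammer_succ_eval, Nat.cast_sub hSs]
    push_cast
    ring
  · refine sum_congr rfl fun S hS => ?_
    have haS : a ∉ S := fun h => ha (mem_powerset.mp hS h)
    rw [card_insert_of_notMem ha, card_insert_of_notMem haS, sum_insert haS,
      Nat.add_sub_add_right, add_right_comm #S 1 j, add_assoc A, add_assoc #S j]

lemma exists_abelSum_eq [DecidableEq ι] (τ : K) (b : ι → K) (s : Finset ι) (j : ℕ) :
    ∃ q ∈ degreeLT K j, ∀ A, (∀ S ⊆ s, A + ∑ i ∈ S, b i ≠ 0) →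
      abelSum τ A b s j = (descPochhammer K (#s + j)).eval τ / (A + ∑ i ∈ s, b i) + q.eval A := by
  induction s using Finset.induction_on generalizing j with
  | empty =>
    set P := (descPochhammer K j).comp (C τ - X)
    refine ⟨divX P, divX_mem_degreeLT ?_, fun A hA => ?_⟩
    · rw [mem_degreeLT]
      refine degree_le_natDegree.trans_lt ?_
      have hP : P.natDegree ≤ j := natDegree_comp_le.trans <| by
        rw [descPochhammer_natDegree]
        exact (Nat.mul_le_mul_left j (natDegree_sub_le_of_le
          ((natDegree_C τ).trans_le zero_le_one) natDegree_X_le)).trans (mul_one j).le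
      exact_mod_cast Nat.lt_succ_of_le hP
    · have hA0 : A ≠ 0 := by simpa using hA ∅ (empty_subset _)
      have hP := congrArg (eval A) (divX_mul_X_add P)
      simp only [P, eval_add, eval_mul, eval_X, eval_C, coeff_zero_eq_eval_zero, eval_comp,
        eval_sub, sub_zero] at hP
      rw [abelSum_empty, card_empty, zero_add, sum_empty, add_zero, ← hP]
      field_simp
      ring
  | insert a s ha ih =>
    obtain ⟨q₁, hq₁, h₁⟩ := ih j
    obtain ⟨q₂, hq₂, h₂⟩ := ih (j + 1)
    refine ⟨(τ - (#s + j)) • q₁ + (taylor (b a) q₂ - q₂),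
      add_mem (Submodule.smul_mem _ _ hq₁) (taylor_sub_self_mem_degreeLT _ hq₂), fun A hA => ?_⟩
    have hA₁ : ∀ S ⊆ s, A + ∑ i ∈ S, b i ≠ 0 := fun S hS => hA S (hS.trans (subset_insert a s))
    have hA₂ : ∀ S ⊆ s, A + b a + ∑ i ∈ S, b i ≠ 0 := fun S hS => by
      simpa [sum_insert (notMem_mono hS ha), add_assoc] using
        hA (insert a S) (insert_subset_insert a hS)
    rw [abelSum_insert _ _ _ ha, h₁ A hA₁, h₂ A hA₁, h₂ (A + b a) hA₂, card_insert_of_notMem ha,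
      sum_insert ha, add_right_comm #s 1 j]
    simp only [← add_assoc, descPochhammer_succ_eval, eval_add, eval_smul, eval_sub, taylor_eval,
      smul_eq_mul]
    push_cast
    ring

lemma abelSum_zero [DecidableEq ι] {τ A : K} {b : ι → K} {s : Finset ι}
    (h : ∀ S ⊆ s, A + ∑ i ∈ S, b i ≠ 0) :
    abelSum τ A b s 0 = (descPochhammer K #s).eval τ / (A + ∑ i ∈ s, b i) := by
  obtain ⟨q, hq, hsum⟩ := exists_abelSum_eq τ b s 0
  rw [mem_degreeLT, Nat.cast_zero, Nat.WithBot.lt_zero_iff, degree_eq_bot] at hq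
  simpa [hq] using hsum A h

/-- The substitution `S ↦ s \ S`, `A ↦ τ - A - Σ_{i ∈ s} b i` exchanges `A + Σ_{i ∈ S} b i` and
`τ - (A + Σ_{i ∈ S} b i)`, so this is `abelSum_zero` read backwards. -/
lemma sum_powerset_div_sub_eq [DecidableEq ι] {τ A : K} {b : ι → K} {s : Finset ι}
    (h : ∀ S ⊆ s, τ - (A + ∑ i ∈ S, b i) ≠ 0) :
    ∑ S ∈ s.powerset, (descPochhammer K (#s - #S)).eval (A + ∑ i ∈ S, b i) *
        (descPochhammer K #S).eval (τ - (A + ∑ i ∈ S, b i)) / (τ - (A + ∑ i ∈ S, b i))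
      = (descPochhammer K #s).eval τ / (τ - A) := by
  set A' := τ - A - ∑ i ∈ s, b i
  have hA' : ∀ S ⊆ s, A' + ∑ i ∈ S, b i = τ - (A + ∑ i ∈ s \ S, b i) := fun S hS => by
    rw [sum_sdiff_eq_sub hS]; ring
  have h' : ∀ S ⊆ s, A' + ∑ i ∈ S, b i ≠ 0 := fun S hS => hA' S hS ▸ h _ sdiff_subset
  have hs : A' + ∑ i ∈ s, b i = τ - A := by ring
  rw [← hs, ← abelSum_zero h', abelSum]
  refine sum_nbij' (s \ ·) (s \ ·) (fun _ _ => mem_powerset.2 sdiff_subset)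
    (fun _ _ => mem_powerset.2 sdiff_subset)
    (fun S hS => Finset.sdiff_sdiff_eq_self (mem_powerset.1 hS))
    (fun S hS => Finset.sdiff_sdiff_eq_self (mem_powerset.1 hS)) fun S hS => ?_
  have hS := mem_powerset.1 hS
  rw [hA' _ sdiff_subset, Finset.sdiff_sdiff_eq_self hS, card_sdiff_of_subset hS,
    Nat.sub_sub_self (card_le_card hS), sub_sub_cancel, add_zero]
  ring

theorem sum_powerset_abel [DecidableEq ι] {τ A : K} {b : ι → K} {s : Finset ι}
    (h₁ : ∀ S ⊆ s, A + ∑ i ∈ S, b i ≠ 0) (h₂ : ∀ S ⊆ s, τ - (A + ∑ i ∈ S, b i) ≠ 0) :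
    ∑ S ∈ s.powerset, τ * (descPochhammer K (#s - #S)).eval (A + ∑ i ∈ S, b i) *
        (descPochhammer K #S).eval (τ - (A + ∑ i ∈ S, b i)) /
          ((A + ∑ i ∈ S, b i) * (τ - (A + ∑ i ∈ S, b i)))
      = (τ - A + (A + ∑ i ∈ s, b i)) / ((A + ∑ i ∈ s, b i) * (τ - A)) *
          (descPochhammer K #s).eval τ := by
  have hsplit : ∀ S ∈ s.powerset, τ * (descPochhammer K (#s - #S)).eval (A + ∑ i ∈ S, b i) *
        (descPochhammer K #S).eval (τ - (A + ∑ i ∈ S, b i)) /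
          ((A + ∑ i ∈ S, b i) * (τ - (A + ∑ i ∈ S, b i)))
      = (descPochhammer K (#s - #S)).eval (A + ∑ i ∈ S, b i) *
          -- `#S + 0` lets the first half fold back into `abelSum τ A b s 0`
          (descPochhammer K (#S + 0)).eval (τ - (A + ∑ i ∈ S, b i)) / (A + ∑ i ∈ S, b i)
        + (descPochhammer K (#s - #S)).eval (A + ∑ i ∈ S, b i) *
          (descPochhammer K #S).eval (τ - (A + ∑ i ∈ S, b i)) / (τ - (A + ∑ i ∈ S, b i)) :=
    fun S hS => by
      have haS := h₁ S (mem_powerset.1 hS)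
      have hτaS := h₂ S (mem_powerset.1 hS)
      rw [add_zero]
      field_simp
      ring
  have hτA : τ - A ≠ 0 := by simpa using h₂ ∅ (empty_subset s)
  have hs := h₁ s subset_rfl
  rw [sum_congr rfl hsplit, sum_add_distrib, ← abelSum, abelSum_zero h₁, sum_powerset_div_sub_eq h₂]
  field_simp

end Abel

section Compositions

variable {ι κ R : Type*} [Fintype ι] [DecidableEq ι] [Fintype κ] [DecidableEq κ] [CommSemiring R]

def compositions (ι : Type*) [Fintype ι] [DecidableEq ι] (n : ℕ) : Finset (ι → ℕ) :=
  (piAntidiag univ n).filter fun f => ∀ i, 0 < f i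

lemma mem_compositions {n : ℕ} {f : ι → ℕ} :
    f ∈ compositions ι n ↔ ∑ i, f i = n ∧ ∀ i, 0 < f i := by
  simp [compositions]

lemma compositions_fin (k n : ℕ) :
    compositions (Fin k) n = (Nat.antidiagonalTuple k n).filter fun f => ∀ i, 0 < f i := by
  ext f
  simp [mem_compositions, Nat.mem_antidiagonalTuple]

lemma card_le_sum_le_of_mem_compositions {n : ℕ} {f : ι → ℕ} (hf : f ∈ compositions ι n)
    (S : Finset ι) : #S ≤ ∑ i ∈ S, f i ∧ ∑ i ∈ S, f i ≤ n := by
  rw [mem_compositions] at hf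
  refine ⟨?_, hf.1 ▸ sum_le_univ_sum_of_nonneg fun _ => Nat.zero_le _⟩
  simpa using card_nsmul_le_sum S f 1 fun i _ => hf.2 i

def compositionSum (w : ℕ → R) (ι : Type*) [Fintype ι] [DecidableEq ι] (n : ℕ) : R :=
  ∑ f ∈ compositions ι n, ∏ i, w (f i)

lemma compositionSum_eq_of_equiv (w : ℕ → R) (e : ι ≃ κ) (n : ℕ) :
    compositionSum w ι n = compositionSum w κ n := by
  refine sum_equiv (e.arrowCongr (Equiv.refl ℕ)) (fun f => ?_) fun f _ => ?_
  · simp only [mem_compositions, Equiv.arrowCongr_apply, Equiv.coe_refl, Function.comp_apply,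
      id_eq, e.symm.sum_comp f, e.forall_congr_left]
  · exact (e.symm.prod_comp fun i => w (f i)).symm

lemma sum_compositions_filter_sum_eq (w : ℕ → R) (S : Finset ι) {m n : ℕ} (hmn : m ≤ n) :
    ∑ f ∈ (compositions ι n).filter (fun f => ∑ i ∈ S, f i = m), ∏ i, w (f i)
      = compositionSum w S m * compositionSum w {i // i ∉ S} (n - m) := by
  have hc : ∀ i, i ∈ Sᶜ ↔ i ∉ S := fun _ => mem_compl
  rw [compositionSum, compositionSum, sum_mul_sum, ← sum_product']
  refine sum_equiv (Equiv.piEquivPiSubtypeProd (· ∈ S) fun _ => ℕ) (fun f => ?_) fun f _ => ?_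
  · have hpos : (∀ i, 0 < f i) ↔ (∀ i : S, 0 < f i) ∧ ∀ i : {i // i ∉ S}, 0 < f i :=
      ⟨fun h => ⟨fun i => h i, fun i => h i⟩, fun h i => by
        by_cases hi : i ∈ S
        exacts [h.1 ⟨i, hi⟩, h.2 ⟨i, hi⟩]⟩
    simp only [mem_filter, mem_compositions, mem_product, Equiv.piEquivPiSubtypeProd_apply, hpos,
      sum_coe_sort S f, ← sum_subtype Sᶜ hc f, ← sum_add_sum_compl S f]
    constructor
    · rintro ⟨⟨hn, h₁, h₂⟩, hm⟩
      exact ⟨⟨hm, h₁⟩, by omega, h₂⟩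
    · rintro ⟨⟨hm, h₁⟩, hn, h₂⟩
      exact ⟨⟨by omega, h₁, h₂⟩, hm⟩
  · simp only [Equiv.piEquivPiSubtypeProd_apply, prod_coe_sort S fun i => w (f i),
      ← prod_subtype Sᶜ hc fun i => w (f i), prod_mul_prod_compl]

lemma sum_compositions_fin_filter_sum_eq (w : ℕ → R) {k ℓ m n : ℕ} {S : Finset (Fin k)}
    (hS : #S = ℓ) (hmn : m ≤ n) :
    ∑ f ∈ (compositions (Fin k) n).filter (fun f => ∑ i ∈ S, f i = m), ∏ i, w (f i)
      = compositionSum w (Fin ℓ) m * compositionSum w (Fin (k - ℓ)) (n - m) := by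
  have hS' : Fintype.card S = ℓ := by simp [hS]
  have hSc : Fintype.card {i // i ∉ S} = k - ℓ := by simp [Fintype.card_subtype_compl, hS]
  rw [sum_compositions_filter_sum_eq w S hmn,
    compositionSum_eq_of_equiv w (Fintype.equivFinOfCardEq hS'),
    compositionSum_eq_of_equiv w (Fintype.equivFinOfCardEq hSc)]

end Compositions

lemma sum_range_sum_Icc_mul_sum_powersetCard {ι R : Type*} [CommSemiring R] {s : Finset ι}
    {k n : ℕ} (hs : #s = k) (T : Finset (ι → ℕ))
    (hT : ∀ f ∈ T, ∀ S ⊆ s, #S ≤ ∑ i ∈ S, f i ∧ ∑ i ∈ S, f i ≤ n)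
    (u : ℕ → ℕ → R) (W : (ι → ℕ) → R) :
    ∑ ℓ ∈ range (k + 1), ∑ m ∈ Icc ℓ n,
        u ℓ m * ∑ S ∈ powersetCard ℓ s, ∑ f ∈ T.filter (fun f => ∑ i ∈ S, f i = m), W f
      = ∑ f ∈ T, W f * ∑ S ∈ s.powerset, u #S (∑ i ∈ S, f i) := by
  simp_rw [mul_sum]
  rw [sum_comm, ← hs, sum_powerset]
  refine sum_congr rfl fun ℓ _ => ?_
  rw [sum_comm]
  refine sum_congr rfl fun S hS => ?_
  obtain ⟨hSs, rfl⟩ := mem_powersetCard.1 hS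
  rw [← sum_fiberwise_of_maps_to (g := fun f => ∑ i ∈ S, f i) (t := Icc #S n)
    fun f hf => mem_Icc.2 (hT f hf S hSs)]
  refine sum_congr rfl fun m _ => sum_congr rfl fun f hf => ?_
  rw [(mem_filter.1 hf).2, mul_comm]

lemma gchoose_eq_descPochhammer_eval_div (z : ℚ) (j : ℕ) :
    gchoose z j = (descPochhammer ℚ j).eval z / j.factorial := by
  rw [gchoose, descPochhammer_eval_eq_prod_range]

lemma bellB_eq_compositionSum (x : ℕ → ℚ) (n k : ℕ) :
    bellB x n k = n.factorial / k.factorial *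
      compositionSum (fun j => x j / j.factorial) (Fin k) n := by
  rw [bellB, compositionSum, compositions_fin]

lemma bell_convolution_summand_eq (x : ℕ → ℚ) {k ℓ m n : ℕ} (hℓ : ℓ ≤ k) (hm : m ≤ n) (τ a : ℚ) :
    τ * gchoose a (k - ℓ) * gchoose (τ - a) ℓ * (n.choose m : ℚ) /
        (a * (τ - a) * (k.choose ℓ : ℚ)) * (bellB x m ℓ * bellB x (n - m) (k - ℓ))
      = n.factorial / k.factorial ^ 2 * (τ * (descPochhammer ℚ (k - ℓ)).eval a *
          (descPochhammer ℚ ℓ).eval (τ - a) / (a * (τ - a)) *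
        ∑ S ∈ powersetCard ℓ univ, ∑ f ∈ (compositions (Fin k) n).filter
          (fun f => ∑ i ∈ S, f i = m), ∏ i, x (f i) / (f i).factorial) := by
  rw [sum_congr rfl fun S hS => sum_compositions_fin_filter_sum_eq (fun j => x j / j.factorial)
      (mem_powersetCard.1 hS).2 hm,
    sum_const, card_powersetCard, card_fin, nsmul_eq_mul, bellB_eq_compositionSum,
    bellB_eq_compositionSum, gchoose_eq_descPochhammer_eval_div,
    gchoose_eq_descPochhammer_eval_div]
  have hnm : (n.choose m : ℚ) * m.factorial * (n - m).factorial = n.factorial := by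
    exact_mod_cast Nat.choose_mul_factorial_mul_factorial hm
  have hkℓ : (k.choose ℓ : ℚ) * ℓ.factorial * (k - ℓ).factorial = k.factorial := by
    exact_mod_cast Nat.choose_mul_factorial_mul_factorial hℓ
  have hkℓ₀ : (k.choose ℓ : ℚ) ≠ 0 := by exact_mod_cast (Nat.choose_pos hℓ).ne'
  rw [← hnm, ← hkℓ]
  field_simp

lemma sum_powerset_affine_abel {K : Type*} [Field K] {k n : ℕ} {τ α₀ α₁ α₂ : K}
    {α : ℕ → ℕ → K} (hα : ∀ ℓ m, α ℓ m = α₀ + α₁ * ℓ + α₂ * m)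
    (hne : ∀ ℓ m, ℓ ≤ k → ℓ ≤ m → m ≤ n → α ℓ m ≠ 0 ∧ τ - α ℓ m ≠ 0)
    {f : Fin k → ℕ} (hf : f ∈ compositions (Fin k) n) :
    ∑ S ∈ univ.powerset, τ * (descPochhammer K (k - #S)).eval (α #S (∑ i ∈ S, f i)) *
        (descPochhammer K #S).eval (τ - α #S (∑ i ∈ S, f i)) /
          (α #S (∑ i ∈ S, f i) * (τ - α #S (∑ i ∈ S, f i)))
      = (τ - α 0 0 + α k n) / (α k n * (τ - α 0 0)) * (descPochhammer K k).eval τ := by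
  set b : Fin k → K := fun i => α₁ + α₂ * f i
  have hαS : ∀ S : Finset (Fin k), α #S (∑ i ∈ S, f i) = α₀ + ∑ i ∈ S, b i := fun S => by
    simp only [hα, b, sum_add_distrib, sum_const, nsmul_eq_mul, ← mul_sum, Nat.cast_sum]
    ring
  have hS : ∀ S : Finset (Fin k), α #S (∑ i ∈ S, f i) ≠ 0 ∧ τ - α #S (∑ i ∈ S, f i) ≠ 0 :=
    fun S => hne _ _ ((card_le_univ S).trans_eq (Fintype.card_fin k))
      (card_le_sum_le_of_mem_compositions hf S).1 (card_le_sum_le_of_mem_compositions hf S).2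
  have h₀ : α 0 0 = α₀ := by simp [hα]
  have hkn : α k n = α₀ + ∑ i, b i := by
    rw [← hαS, card_univ, Fintype.card_fin, (mem_compositions.1 hf).1]
  have := sum_powerset_abel (τ := τ) (A := α₀) (b := b) (s := univ)
    (fun S _ => hαS S ▸ (hS S).1) (fun S _ => hαS S ▸ (hS S).2)
  rw [card_fin] at this
  simp only [hαS, h₀, hkn]
  exact this

/-- Convolution formula for partial Bell polynomials ([BGW12, Corollary 11]). -/
theorem bell_convolution (x : ℕ → ℚ) (n k : ℕ) (τ α₀ α₁ α₂ : ℚ)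
    (α : ℕ → ℕ → ℚ) (hα : ∀ ℓ m, α ℓ m = α₀ + α₁ * ℓ + α₂ * m)
    (hne : ∀ ℓ m, ℓ ≤ k → ℓ ≤ m → m ≤ n → α ℓ m ≠ 0 ∧ τ - α ℓ m ≠ 0) :
    ∑ ℓ ∈ Finset.range (k + 1), ∑ m ∈ Finset.Icc ℓ n,
      (τ * gchoose (α ℓ m) (k - ℓ) * gchoose (τ - α ℓ m) ℓ * (n.choose m : ℚ)) /
        (α ℓ m * (τ - α ℓ m) * (k.choose ℓ : ℚ)) * (bellB x m ℓ * bellB x (n - m) (k - ℓ))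
    = (τ - α 0 0 + α k n) / (α k n * (τ - α 0 0)) * gchoose τ k * bellB x n k := by
  rw [sum_congr rfl fun ℓ hℓ => sum_congr rfl fun m hm =>
    bell_convolution_summand_eq x (mem_range_succ_iff.1 hℓ) (mem_Icc.1 hm).2 τ (α ℓ m)]
  simp_rw [← mul_sum]
  rw [sum_range_sum_Icc_mul_sum_powersetCard (card_fin k) _
      (fun f hf S _ => card_le_sum_le_of_mem_compositions hf S),
    sum_congr rfl fun f hf => by rw [sum_powerset_affine_abel hα hne hf], ← sum_mul,
    bellB_eq_compositionSum, gchoose_eq_descPochhammer_eval_div, compositionSum]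
  ring
end

section
/- Cayley's formula satisfies the partition recurrence: define f(r,k) := (1/(r+1))·C(r+k, k)·C(r−1, k−1) ∈ ℚ for integers r, k ≥ 1. Then f(r,1) = 1 for all r ≥ 1, and for all r ≥ 1 and k ≥ 2, 2(k−1)·f(r,k) = (r+2)·∑_{ℓ=1}^{k−1} ∑_{m=ℓ}^{r−1} f(r−m, k−ℓ)·f(m, ℓ). (Thus f(r,k) is Cayley's count of the partitions of a convex (r+2)-gon into k parts by k−1 noncrossing diagonals.) -/
/-- Cayley's formula `f(r,k) = (1/(r+1))·C(r+k,k)·C(r-1,k-1)`. -/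
def cayley (r k : ℕ) : ℚ :=
  (1 / ((r : ℚ) + 1)) * (((r + k).choose k : ℕ) : ℚ) * (((r - 1).choose (k - 1) : ℕ) : ℚ)

/-!
Let `G ∈ ℚ[y][[x]]` be the power series solving `G = x ((1 + y) G² + (1 + 2y) G + y)`
(below, `x` is the power-series variable and `y` the polynomial variable). Lagrange inversion
predicts `[x^r y^k] G^j = (j/r) C(r,k) C(r+k, r+j)` for `r ≥ 1`. Rather than invoking it, we check
that these numbers satisfy the recursion obtained by extracting `[x^(r+1) y^(k+1)]` from
`G^(j+1) = x ((1 + y) G^(j+2) + (1 + 2y) G^(j+1) + y G^j)`, which holds for all `j` at once.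
For `j = 1` the numbers are `f(r,k)`, for `j = 2` they are `2(k-1) f(r,k) / (r+2)`, and expanding
`[x^r y^k] G²` as a convolution of coefficients of `G` gives the recurrence.
-/

open Finset

theorem Nat.cast_choose_succ_right_mul {R : Type*} [CommRing R] (n k : ℕ) :
    (n.choose (k + 1) : R) * (k + 1) = n.choose k * (n - k) := by
  rcases le_or_gt k n with h | h
  · exact_mod_cast congrArg (Nat.cast (R := R)) (Nat.choose_succ_right_eq n k)
  · simp [Nat.choose_eq_zero_of_lt h, Nat.choose_eq_zero_of_lt (Nat.lt_succ_of_lt h)]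

/-- The `r = 0` row is the constant coefficient of `G ^ j`; the bottom index `r + j`, rather than
`k - j`, makes the formula vanish for `k < j` without truncated subtraction. -/
def cayleyPowCoeff (j r k : ℕ) : ℚ :=
  if r = 0 then if j = 0 ∧ k = 0 then 1 else 0
  else j * r.choose k * (r + k).choose (r + j) / r

theorem cayleyPowCoeff_zero_left (j k : ℕ) :
    cayleyPowCoeff j 0 k = if j = 0 ∧ k = 0 then 1 else 0 := if_pos rfl

theorem cayleyPowCoeff_of_ne_zero {r : ℕ} (hr : r ≠ 0) (j k : ℕ) :
    cayleyPowCoeff j r k = j * r.choose k * (r + k).choose (r + j) / r := if_neg hr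

theorem cayleyPowCoeff_succ_zero_right (j r : ℕ) : cayleyPowCoeff (j + 1) r 0 = 0 := by
  rcases eq_or_ne r 0 with rfl | hr
  · simp [cayleyPowCoeff_zero_left]
  · simp [cayleyPowCoeff_of_ne_zero hr, Nat.choose_eq_zero_of_lt]

theorem cayleyPowCoeff_eq_zero_of_lt {r k : ℕ} (h : r < k) (j : ℕ) : cayleyPowCoeff j r k = 0 := by
  rcases eq_or_ne r 0 with rfl | hr
  · simp [cayleyPowCoeff_zero_left, h.ne']
  · simp [cayleyPowCoeff_of_ne_zero hr, Nat.choose_eq_zero_of_lt h]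

theorem cayleyPowCoeff_succ_succ_of_ne_zero {a : ℕ} (ha : a ≠ 0) (j k : ℕ) :
    cayleyPowCoeff (j + 1) (a + 1) (k + 1) =
      cayleyPowCoeff (j + 2) a (k + 1) + cayleyPowCoeff (j + 1) a (k + 1) +
        cayleyPowCoeff (j + 2) a k + 2 * cayleyPowCoeff (j + 1) a k + cayleyPowCoeff j a k := by
  simp only [cayleyPowCoeff_of_ne_zero ha, cayleyPowCoeff_of_ne_zero (Nat.succ_ne_zero a)]
  rw [show a + 1 + (k + 1) = a + k + 1 + 1 by ring, show a + 1 + (j + 1) = a + j + 1 + 1 by ring,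
    show a + (k + 1) = a + k + 1 by ring, show a + (j + 2) = a + j + 1 + 1 by ring,
    show a + (j + 1) = a + j + 1 by ring]
  simp only [Nat.choose_succ_succ', Nat.cast_add, Nat.cast_one, Nat.cast_ofNat]
  have RB := Nat.cast_choose_succ_right_mul (R := ℚ) a k
  have R1 := Nat.cast_choose_succ_right_mul (R := ℚ) (a + k) (a + j)
  have R2 := Nat.cast_choose_succ_right_mul (R := ℚ) (a + k) (a + j + 1)
  push_cast at R1 R2
  set A : ℚ := ((a.choose k : ℕ) : ℚ)
  set B : ℚ := ((a.choose (k + 1) : ℕ) : ℚ)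
  set P0 : ℚ := (((a + k).choose (a + j) : ℕ) : ℚ)
  set P1 : ℚ := (((a + k).choose (a + j + 1) : ℕ) : ℚ)
  set P2 : ℚ := (((a + k).choose (a + j + 1 + 1) : ℕ) : ℚ)
  -- The bracket is `a (a + 1)` times the difference of the two sides; the relations `R2`, `R1`, `RB`
  -- eliminate `P2`, `P1` and `B` in turn.
  have hD : ((a : ℚ) + j + 1) * ((j - a) * A * P0 + 2 * (j + 1) * A * P1 + (a + j + 2) * A * P2
      + (j + 1) * B * P0 + (a + 2 * j + 3) * B * P1 + (a + j + 2) * B * P2) = 0 := by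
    linear_combination ((a : ℚ) + j + 1) * (A + B) * R2
      + ((k + j + 1) * A + (a + k + j + 2) * B) * R1 + P0 * (k + a + 1) * RB
  have hD0 := (mul_eq_zero.1 hD).resolve_left (by positivity)
  have ha' : (a : ℚ) ≠ 0 := Nat.cast_ne_zero.2 ha
  push_cast
  field_simp
  linear_combination -hD0

theorem cayleyPowCoeff_succ_succ (j n k : ℕ) :
    cayleyPowCoeff (j + 1) (n + 1) (k + 1) =
      cayleyPowCoeff (j + 2) n (k + 1) + cayleyPowCoeff (j + 1) n (k + 1) +
        cayleyPowCoeff (j + 2) n k + 2 * cayleyPowCoeff (j + 1) n k + cayleyPowCoeff j n k := by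
  rcases eq_or_ne n 0 with rfl | hn
  · rcases k with _ | k <;> rcases j with _ | j <;>
      simp [cayleyPowCoeff_zero_left, cayleyPowCoeff_of_ne_zero, Nat.choose_eq_zero_iff]
    omega
  · exact cayleyPowCoeff_succ_succ_of_ne_zero hn j k

open Polynomial in
noncomputable def cayleySeriesCoeff : ℕ → ℚ[X]
  | 0 => 0
  | n + 1 =>
      (1 + X) * (∑ p ∈ (antidiagonal n).attach,
          have := HasAntidiagonal.antidiagonal.fst_le p.2
          have := HasAntidiagonal.antidiagonal.snd_le p.2
          cayleySeriesCoeff p.1.1 * cayleySeriesCoeff p.1.2) +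
        (1 + 2 * X) * cayleySeriesCoeff n + if n = 0 then X else 0

open Polynomial in
theorem cayleySeriesCoeff_succ (n : ℕ) :
    cayleySeriesCoeff (n + 1) =
      (1 + X) * ∑ p ∈ antidiagonal n, cayleySeriesCoeff p.1 * cayleySeriesCoeff p.2 +
        (1 + 2 * X) * cayleySeriesCoeff n + if n = 0 then X else 0 := by
  rw [cayleySeriesCoeff, ← sum_attach (antidiagonal n)]

noncomputable def cayleySeries : PowerSeries (Polynomial ℚ) := PowerSeries.mk cayleySeriesCoeff

theorem cayleySeries_eq : cayleySeries = PowerSeries.X *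
    (PowerSeries.C (1 + Polynomial.X) * cayleySeries ^ 2 +
      PowerSeries.C (1 + 2 * Polynomial.X) * cayleySeries + PowerSeries.C Polynomial.X) := by
  ext (_ | n)
  · simp [cayleySeries, cayleySeriesCoeff]
  · rw [PowerSeries.coeff_succ_X_mul, map_add, map_add, PowerSeries.coeff_C_mul,
      PowerSeries.coeff_C_mul, PowerSeries.coeff_C, sq, PowerSeries.coeff_mul]
    simp only [cayleySeries, PowerSeries.coeff_mk, cayleySeriesCoeff_succ]

theorem cayleySeries_pow_succ (j : ℕ) : cayleySeries ^ (j + 1) = PowerSeries.X *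
    (PowerSeries.C (1 + Polynomial.X) * cayleySeries ^ (j + 2) +
      PowerSeries.C (1 + 2 * Polynomial.X) * cayleySeries ^ (j + 1) +
      PowerSeries.C Polynomial.X * cayleySeries ^ j) := by
  rw [pow_succ']
  nth_rewrite 1 [cayleySeries_eq]
  ring

theorem coeff_coeff_cayleySeries_pow (r j k : ℕ) :
    (PowerSeries.coeff r (cayleySeries ^ j)).coeff k = cayleyPowCoeff j r k := by
  induction r generalizing j k with
  | zero =>
    have h0 : PowerSeries.constantCoeff cayleySeries = 0 := by
      simp [cayleySeries, cayleySeriesCoeff]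
    rcases j with _ | j <;>
      simp [PowerSeries.coeff_zero_eq_constantCoeff, h0, cayleyPowCoeff_zero_left,
        Polynomial.coeff_one, eq_comm]
  | succ r ih =>
    rcases j with _ | j
    · simp [PowerSeries.coeff_one, cayleyPowCoeff_of_ne_zero]
    rw [cayleySeries_pow_succ, PowerSeries.coeff_succ_X_mul, map_add, map_add,
      PowerSeries.coeff_C_mul, PowerSeries.coeff_C_mul, PowerSeries.coeff_C_mul]
    rcases k with _ | k
    · simp [ih, cayleyPowCoeff_succ_zero_right]
    · simp [add_mul, mul_assoc, Polynomial.coeff_X_mul, ih, cayleyPowCoeff_succ_succ]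
      ring

theorem mul_cayleyPowCoeff_succ {r : ℕ} (hr : r ≠ 0) (j k : ℕ) :
    j * (r + j + 1) * cayleyPowCoeff (j + 1) r k = (j + 1) * (k - j) * cayleyPowCoeff j r k := by
  have h := Nat.cast_choose_succ_right_mul (R := ℚ) (r + k) (r + j)
  have hr' : (r : ℚ) ≠ 0 := Nat.cast_ne_zero.2 hr
  simp only [cayleyPowCoeff_of_ne_zero hr, ← add_assoc]
  push_cast at h ⊢
  field_simp
  linear_combination (j : ℚ) * (r.choose k) * h

theorem cayley_eq_cayleyPowCoeff_one {r k : ℕ} (hr : r ≠ 0) (hk : k ≠ 0) :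
    cayley r k = cayleyPowCoeff 1 r k := by
  obtain ⟨R, rfl⟩ := Nat.exists_eq_add_one_of_ne_zero hr
  obtain ⟨K, rfl⟩ := Nat.exists_eq_add_one_of_ne_zero hk
  have hsymm : (R + 1 + (K + 1)).choose (K + 1) = (R + 1 + (K + 1)).choose (R + 1) :=
    Nat.choose_symm_of_eq_add (by ring)
  have h1 := Nat.cast_choose_succ_right_mul (R := ℚ) (R + 1 + (K + 1)) (R + 1)
  have h2 := congrArg (Nat.cast (R := ℚ)) (Nat.add_one_mul_choose_eq R K)
  rw [cayley, cayleyPowCoeff_of_ne_zero hr, hsymm, Nat.add_sub_cancel, Nat.add_sub_cancel]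
  push_cast at h1 h2 ⊢
  field_simp
  linear_combination (((R + 1 + (K + 1)).choose (R + 1) : ℕ) : ℚ) * h2
    - (((R + 1).choose (K + 1) : ℕ) : ℚ) * h1

theorem cayleyPowCoeff_two_eq_sum (r k : ℕ) :
    cayleyPowCoeff 2 r k = ∑ ℓ ∈ Icc 1 (k - 1), ∑ m ∈ Icc ℓ (r - 1),
      cayley (r - m) (k - ℓ) * cayley m ℓ := by
  have hsquare : cayleyPowCoeff 2 r k = ∑ ℓ ∈ range (k + 1), ∑ m ∈ range (r + 1),
      cayleyPowCoeff 1 (r - m) (k - ℓ) * cayleyPowCoeff 1 m ℓ := by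
    rw [← coeff_coeff_cayleySeries_pow, sq, PowerSeries.coeff_mul, Polynomial.finsetSum_coeff,
      Nat.sum_antidiagonal_eq_sum_range_succ_mk, sum_comm]
    refine sum_congr rfl fun m _ => ?_
    rw [Polynomial.coeff_mul, Nat.sum_antidiagonal_eq_sum_range_succ_mk]
    simp only [← coeff_coeff_cayleySeries_pow, pow_one, mul_comm]
  have hinner : ∀ ℓ ∈ Icc 1 (k - 1), ∑ m ∈ Icc ℓ (r - 1), cayley (r - m) (k - ℓ) * cayley m ℓ =
      ∑ m ∈ range (r + 1), cayleyPowCoeff 1 (r - m) (k - ℓ) * cayleyPowCoeff 1 m ℓ := by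
    intro ℓ hℓ
    rw [mem_Icc] at hℓ
    refine sum_subset_zero_on_sdiff (fun m hm => by grind) ?_ ?_
    · intro m hm
      simp only [mem_sdiff, mem_range, mem_Icc] at hm
      rcases lt_or_ge m ℓ with h | h
      · rw [cayleyPowCoeff_eq_zero_of_lt h, mul_zero]
      · rw [cayleyPowCoeff_eq_zero_of_lt (by omega : r - m < k - ℓ), zero_mul]
    · intro m hm
      rw [mem_Icc] at hm
      rw [cayley_eq_cayleyPowCoeff_one (by omega) (by omega),
        cayley_eq_cayleyPowCoeff_one (by omega) (by omega)]
  rw [hsquare, sum_congr rfl hinner]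
  symm
  refine sum_subset_zero_on_sdiff (fun ℓ hℓ => by grind) ?_ fun _ _ => rfl
  intro ℓ hℓ
  simp only [mem_sdiff, mem_range, mem_Icc] at hℓ
  refine sum_eq_zero fun m _ => ?_
  rcases Nat.eq_zero_or_pos ℓ with rfl | h
  · rw [cayleyPowCoeff_succ_zero_right, mul_zero]
  · rw [show k - ℓ = 0 by omega, cayleyPowCoeff_succ_zero_right, zero_mul]

/-- Cayley's formula satisfies the polygon-partition recurrence. -/
theorem cayley_recurrence :
    (∀ r : ℕ, 1 ≤ r → cayley r 1 = 1) ∧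
    (∀ r k : ℕ, 1 ≤ r → 2 ≤ k →
      2 * ((k : ℚ) - 1) * cayley r k =
        ((r : ℚ) + 2) *
          ∑ ℓ ∈ Finset.Icc 1 (k - 1), ∑ m ∈ Finset.Icc ℓ (r - 1),
            cayley (r - m) (k - ℓ) * cayley m ℓ) := by
  refine ⟨fun r _ => ?_, fun r k hr hk => ?_⟩
  · simp only [cayley, Nat.choose_one_right, Nat.sub_self, Nat.choose_zero_right]
    push_cast
    field_simp
  · rw [← cayleyPowCoeff_two_eq_sum, cayley_eq_cayleyPowCoeff_one (by omega) (by omega)]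
    have h := mul_cayleyPowCoeff_succ (by omega : r ≠ 0) 1 k
    push_cast at h
    linear_combination -h
end

section
/- Closed form for the number of partitions of a polygon into odd-gons, counted by edges: for every integer n ≥ 1, (2n+1)·∑_{k=1}^{n} C(2n, k−1)·C(n, k) = n·C(3n, n). (Equivalently, (1/n)·∑_{k=1}^{n} C(2n, k−1)·C(n, k) = (1/(2n+1))·C(3n, n), the n-th Fuss–Catalan number of order 3.) -/
/-!
Since `C(n, k) = C(n, n - k)`, the sum is a Vandermonde convolution and equals `C(3n, n - 1)`;
the ratio `C(3n, n) / C(3n, n - 1) = (2n + 1) / n` then gives the closed form.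
-/

open Finset

theorem Nat.sum_choose_mul_choose_succ (m n : ℕ) :
    ∑ j ∈ range (n + 1), m.choose j * (n + 1).choose (j + 1) = (m + (n + 1)).choose n := by
  rw [Nat.add_choose_eq, Nat.sum_antidiagonal_eq_sum_range_succ_mk]
  refine sum_congr rfl fun j hj => ?_
  rw [Nat.choose_symm_of_eq_add (by grind : n + 1 = (j + 1) + (n - j))]

theorem Nat.sum_Icc_choose_pred_mul_choose (m n : ℕ) :
    ∑ k ∈ Icc 1 (n + 1), m.choose (k - 1) * (n + 1).choose k = (m + (n + 1)).choose n := by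
  rw [← Ico_add_one_right_eq_Icc, sum_Ico_eq_sum_range, ← Nat.sum_choose_mul_choose_succ]
  refine sum_congr (by simp) fun j _ => ?_
  rw [add_comm 1 j, Nat.add_sub_cancel]

/-- Closed form for the number of partitions of a polygon into odd-gons, counted by
edges: `(2n+1)·∑_{k=1}^{n} C(2n, k-1)·C(n, k) = n·C(3n, n)`. -/
theorem odd_gon_partitions_closed_form (n : ℕ) (hn : 1 ≤ n) :
    (2 * n + 1) * ∑ k ∈ Finset.Icc 1 n, (2 * n).choose (k - 1) * n.choose k
      = n * (3 * n).choose n := by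
  obtain ⟨m, rfl⟩ := Nat.exists_eq_add_of_le' hn
  rw [Nat.sum_Icc_choose_pred_mul_choose, show 2 * (m + 1) + (m + 1) = 3 * (m + 1) by ring]
  have ratio := Nat.choose_succ_right_eq (3 * (m + 1)) m
  rw [show 3 * (m + 1) - m = 2 * (m + 1) + 1 by omega] at ratio
  linarith
end

section
/- Proposition (d-fold convolution, case a = 1, b = 2): let c : ℕ → ℚ be a sequence and define p̂(m,ℓ) := (1/(m+ℓ+1))·C(m+ℓ+1, ℓ)·P_c(m,ℓ) for m, ℓ ∈ ℕ (so p̂(0,0) = 1 and p̂(m,0) = 0 for m > 0). Then for all integers d ≥ 1 and all n, k ∈ ℕ, ∑ p̂(m_1,ℓ_1)···p̂(m_d,ℓ_d) = (d/(n+k+d))·C(n+k+d, k)·P_c(n,k), where the sum ranges over all d-tuples (ℓ_1,…,ℓ_d) of nonnegative integers with ℓ_1+⋯+ℓ_d = k and all d-tuples (m_1,…,m_d) of nonnegative integers with m_1+⋯+m_d = n. -/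
/-- Weighted composition sum `P_c(n,k) = ∑ c_{m_1}⋯c_{m_k}` over compositions of `n`
into `k` positive parts; equals `(k!/n!)·B_{n,k}(1!c_1, 2!c_2, …)`. -/
def Pc (c : ℕ → ℚ) (n k : ℕ) : ℚ :=
  ∑ f ∈ (Finset.Nat.antidiagonalTuple k n).filter (fun f => ∀ i, 0 < f i),
    ∏ i, c (f i)

/-- `p̂(m,ℓ) = (1/(m+ℓ+1))·C(m+ℓ+1, ℓ)·P_c(m,ℓ)` (case `a = 1`, `b = 2`). -/
def phat (c : ℕ → ℚ) (m ℓ : ℕ) : ℚ :=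
  (1 / ((m + ℓ + 1 : ℕ) : ℚ)) * (((m + ℓ + 1).choose ℓ : ℕ) : ℚ) * Pc c m ℓ

/-!
Write `Q_p(n,k)` for the right-hand side with `d = p` (and `Q_0(n,k) = δ_{(n,k),(0,0)}`), and
`G_p = ∑ Q_p(n,k) x^n y^k`. The sum on the left is the coefficient of `x^n y^k` in `G_1^d`, so it
suffices that `G_p G_q = G_{p+q}`. This is proved by induction on the `y`-degree and then on `p`
from the recurrence `G_{s+1} = G_s + y ∑_{a ≥ 1} c_a x^a G_{s+1+a}`, the coefficient form of
`B^{s+1} - B^s = y B^{s+1} C(xB)` for the series `B = G_1` solving `B = 1 + y B C(xB)`, where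
`C(x) = ∑ c_m x^m`. Coefficientwise the recurrence reduces to a binomial identity and to
`n [x^n] C^{k+1} = (k+1) ∑_a a c_a [x^{n-a}] C^k`, obtained by differentiating `C^{k+1}`.
-/

open Finset Finset.Nat PowerSeries

theorem Finset.Nat.sum_antidiagonalTuple_succ {M : Type*} [AddCommMonoid M] (k n : ℕ)
    (F : (Fin (k + 1) → ℕ) → M) :
    ∑ f ∈ antidiagonalTuple (k + 1) n, F f =
      ∑ p ∈ antidiagonal n, ∑ g ∈ antidiagonalTuple k p.2, F (Fin.cons p.1 g) := by
  simp only [Finset.sum, antidiagonalTuple, Multiset.Nat.antidiagonalTuple,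
    List.Nat.antidiagonalTuple, List.flatMap, Multiset.map_coe, List.map_flatten, List.map_map,
    Function.comp_def, Multiset.sum_coe, List.sum_flatten]
  rfl

theorem Finset.sum_antidiagonal_antidiagonal_assoc {A M : Type*} [AddCommMonoid A]
    [HasAntidiagonal A] [AddCommMonoid M] (n : A) (f : A → A → A → M) :
    ∑ x ∈ antidiagonal n, ∑ y ∈ antidiagonal x.1, f y.1 y.2 x.2 =
      ∑ x ∈ antidiagonal n, ∑ y ∈ antidiagonal x.2, f x.1 y.1 y.2 := by
  rw [sum_sigma', sum_sigma']
  apply sum_nbij' (fun ⟨⟨_i, j⟩, ⟨k, l⟩⟩ ↦ ⟨(k, l + j), (l, j)⟩)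
    (fun ⟨⟨i, _j⟩, ⟨k, l⟩⟩ ↦ ⟨(i + k, l), (i, k)⟩) <;> aesop (add simp [add_assoc])

namespace PowerSeries

variable {R : Type*} [CommSemiring R]

theorem coeff_prod_fin {k : ℕ} (f : Fin k → R⟦X⟧) (n : ℕ) :
    coeff n (∏ i, f i) = ∑ l ∈ antidiagonalTuple k n, ∏ i, coeff (l i) (f i) := by
  induction k generalizing n with
  | zero => cases n <;> simp
  | succ k ih =>
    simp only [Fin.prod_univ_succ, coeff_mul, ih, sum_antidiagonalTuple_succ, mul_sum,
      Fin.cons_zero, Fin.cons_succ]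

theorem coeff_pow_eq_sum_antidiagonalTuple (f : R⟦X⟧) (k n : ℕ) :
    coeff n (f ^ k) = ∑ l ∈ antidiagonalTuple k n, ∏ i, coeff (l i) f := by
  rw [← Fin.prod_const, coeff_prod_fin]

/-- Coefficientwise form of `X * (f ^ (k + 1))' = (k + 1) * f ^ k * (X * f')`. -/
theorem natCast_mul_coeff_pow_succ (f : R⟦X⟧) (k n : ℕ) :
    n * coeff n (f ^ (k + 1)) =
      (k + 1) * ∑ p ∈ antidiagonal n, p.1 * coeff p.1 f * coeff p.2 (f ^ k) := by
  cases n with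
  | zero => simp
  | succ n =>
    calc ((n + 1 : ℕ) : R) * coeff (n + 1) (f ^ (k + 1))
        = coeff n (d⁄dX R (f ^ (k + 1))) := by rw [coeff_derivative]; push_cast; ring
      _ = (k + 1) * coeff n (d⁄dX R f * f ^ k) := by
        rw [derivative_pow, add_tsub_cancel_right, ← map_natCast (C (R := R)), mul_assoc,
          coeff_C_mul, mul_comm (f ^ k), Nat.cast_add_one]
      _ = _ := by
        simp only [coeff_mul, coeff_derivative, sum_antidiagonal_succ]
        push_cast
        simp only [zero_mul, zero_add]
        exact congrArg _ (sum_congr rfl fun p _ => by ring)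

end PowerSeries

def cSeries (c : ℕ → ℚ) : ℚ⟦X⟧ :=
  PowerSeries.mk fun m => if m = 0 then 0 else c m

theorem Pc_eq_coeff_pow (c : ℕ → ℚ) (n k : ℕ) : Pc c n k = coeff n (cSeries c ^ k) := by
  rw [Pc, coeff_pow_eq_sum_antidiagonalTuple, sum_filter]
  refine sum_congr rfl fun f _ => ?_
  split_ifs with hf
  · exact prod_congr rfl fun i _ => by simp [cSeries, (hf i).ne']
  · obtain ⟨i, hi⟩ := not_forall.1 hf
    exact (prod_eq_zero (mem_univ i) (by simp [cSeries, Nat.eq_zero_of_not_pos hi])).symm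

theorem sum_coeff_cSeries_mul_Pc (c : ℕ → ℚ) (s : ℚ) (n k : ℕ) :
    ∑ p ∈ antidiagonal n, coeff p.1 (cSeries c) * ((s + p.1) * Pc c p.2 k) =
      (s + n / (k + 1)) * Pc c n (k + 1) := by
  have hconv : ∑ p ∈ antidiagonal n, coeff p.1 (cSeries c) * Pc c p.2 k = Pc c n (k + 1) := by
    simp only [Pc_eq_coeff_pow, pow_succ', coeff_mul]
  have hweight := natCast_mul_coeff_pow_succ (cSeries c) k n
  simp only [← Pc_eq_coeff_pow] at hweight
  calc _ = s * ∑ p ∈ antidiagonal n, coeff p.1 (cSeries c) * Pc c p.2 k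
        + ∑ p ∈ antidiagonal n, p.1 * coeff p.1 (cSeries c) * Pc c p.2 k := by
        rw [mul_sum, ← sum_add_distrib]
        exact sum_congr rfl fun _ _ => by ring
    _ = _ := by
      rw [hconv]
      field_simp
      linear_combination -hweight

theorem choose_div_recurrence (s n k : ℕ) :
    (s + 1 : ℚ) / (n + k + s + 2) * ((n + k + s + 2).choose (k + 1) : ℕ) =
      s / (n + k + s + 1) * ((n + k + s + 1).choose (k + 1) : ℕ)
        + ((n + k + s + 1).choose k : ℕ) / (n + k + s + 1) * (s + 1 + n / (k + 1)) := by
  have hsucc : ((n + k + s + 2).choose (k + 1) : ℚ) * (k + 1) =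
      (n + k + s + 2) * (n + k + s + 1).choose k := by
    exact_mod_cast (Nat.add_one_mul_choose_eq (n + k + s + 1) k).symm
  have hright : ((n + k + s + 1).choose (k + 1) : ℚ) * (k + 1) =
      (n + k + s + 1).choose k * (n + s + 1) := by
    have h := Nat.choose_succ_right_eq (n + k + s + 1) k
    rw [show n + k + s + 1 - k = n + s + 1 by omega] at h
    exact_mod_cast h
  field_simp
  linear_combination (s + 1 : ℚ) * (n + k + s + 1) * hsucc - s * (n + k + s + 2) * hright

/-- At `p = 0` the closed formula vanishes identically; the convolution unit is used instead. -/
def phatPow (c : ℕ → ℚ) (p n k : ℕ) : ℚ :=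
  if p = 0 then (if n = 0 ∧ k = 0 then 1 else 0)
  else ((p : ℚ) / ((n + k + p : ℕ) : ℚ)) * (((n + k + p).choose k : ℕ) : ℚ) * Pc c n k

theorem phatPow_one (c : ℕ → ℚ) (m ℓ : ℕ) : phatPow c 1 m ℓ = phat c m ℓ := by
  simp [phatPow, phat]

theorem phatPow_zero_right (c : ℕ → ℚ) (p n : ℕ) :
    phatPow c p n 0 = if n = 0 then 1 else 0 := by
  rcases eq_or_ne p 0 with rfl | hp
  · simp [phatPow]
  · rcases eq_or_ne n 0 with rfl | hn <;> simp [phatPow, Pc_eq_coeff_pow, coeff_one, *]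

theorem phatPow_succ_right (c : ℕ → ℚ) (p n k : ℕ) :
    phatPow c p n (k + 1) =
      ((p : ℚ) / ((n + (k + 1) + p : ℕ) : ℚ)) * (((n + (k + 1) + p).choose (k + 1) : ℕ) : ℚ) *
        Pc c n (k + 1) := by
  rcases eq_or_ne p 0 with rfl | hp <;> simp [phatPow, *]

theorem phatPow_succ_succ (c : ℕ → ℚ) (s n k : ℕ) :
    phatPow c (s + 1) n (k + 1) = phatPow c s n (k + 1) +
      ∑ p ∈ antidiagonal n, coeff p.1 (cSeries c) * phatPow c (s + 1 + p.1) p.2 k := by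
  have hsum : ∑ p ∈ antidiagonal n, coeff p.1 (cSeries c) * phatPow c (s + 1 + p.1) p.2 k =
      ((n + k + s + 1).choose k : ℕ) / (n + k + s + 1 : ℚ) *
        ((s + 1 + n / (k + 1)) * Pc c n (k + 1)) := by
    rw [← sum_coeff_cSeries_mul_Pc, mul_sum]
    refine sum_congr rfl fun p hp => ?_
    rw [HasAntidiagonal.mem_antidiagonal] at hp
    rw [phatPow, if_neg (by omega), show p.2 + k + (s + 1 + p.1) = n + k + s + 1 by omega]
    push_cast
    ring
  rw [hsum, phatPow_succ_right, phatPow_succ_right, show n + (k + 1) + s = n + k + s + 1 by ring,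
    show n + (k + 1) + (s + 1) = n + k + s + 2 by ring]
  push_cast
  linear_combination Pc c n (k + 1) * choose_div_recurrence s n k

/-- `∑ phatPow c p n k x^n y^k`, with `y` the outer variable. -/
def phatPowSeries (c : ℕ → ℚ) (p : ℕ) : ℚ⟦X⟧⟦X⟧ :=
  PowerSeries.mk fun k => PowerSeries.mk fun n => phatPow c p n k

/-- `∑_{a ≥ 1} c_a x^a · phatPowSeries c (s + a)`, an infinite sum written coefficientwise. -/
noncomputable def phatPowTail (c : ℕ → ℚ) (s : ℕ) : ℚ⟦X⟧⟦X⟧ :=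
  PowerSeries.mk fun k => PowerSeries.mk fun n =>
    ∑ p ∈ antidiagonal n, coeff p.1 (cSeries c) * phatPow c (s + p.1) p.2 k

@[simp]
theorem coeff_coeff_phatPowSeries (c : ℕ → ℚ) (p n k : ℕ) :
    coeff n (coeff k (phatPowSeries c p)) = phatPow c p n k := by
  simp [phatPowSeries]

theorem constantCoeff_phatPowSeries (c : ℕ → ℚ) (p : ℕ) :
    constantCoeff (phatPowSeries c p) = 1 := by
  ext n
  rw [← coeff_zero_eq_constantCoeff_apply, coeff_coeff_phatPowSeries, phatPow_zero_right, coeff_one]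

theorem phatPowSeries_zero (c : ℕ → ℚ) : phatPowSeries c 0 = 1 := by
  ext k n
  rcases eq_or_ne k 0 with rfl | hk <;> simp [phatPow, coeff_one, constantCoeff_phatPowSeries, *]

theorem phatPowSeries_succ (c : ℕ → ℚ) (s : ℕ) :
    phatPowSeries c (s + 1) = phatPowSeries c s + X * phatPowTail c (s + 1) := by
  ext k n
  cases k with
  | zero => simp [coeff_zero_eq_constantCoeff_apply, constantCoeff_phatPowSeries]
  | succ k => simp [coeff_succ_X_mul, phatPowTail, phatPow_succ_succ]

theorem coeff_phatPowTail_mul (c : ℕ → ℚ) {s q k : ℕ}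
    (hk : ∀ p,
      coeff k (phatPowSeries c p * phatPowSeries c q) = coeff k (phatPowSeries c (p + q))) :
    coeff k (phatPowTail c s * phatPowSeries c q) = coeff k (phatPowTail c (s + q)) := by
  ext n
  calc coeff n (coeff k (phatPowTail c s * phatPowSeries c q))
      = ∑ x ∈ antidiagonal k, ∑ z ∈ antidiagonal n, coeff z.1 (cSeries c) *
          ∑ y ∈ antidiagonal z.2, phatPow c (s + z.1) y.1 x.1 * phatPow c q y.2 x.2 := by
        simp only [coeff_mul, map_sum, phatPowTail, coeff_mk, coeff_coeff_phatPowSeries,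
          sum_mul, mul_sum, mul_assoc]
        exact sum_congr rfl fun x _ => sum_antidiagonal_antidiagonal_assoc n
          fun a b e => coeff a (cSeries c) * (phatPow c (s + a) b x.1 * phatPow c q e x.2)
    _ = ∑ z ∈ antidiagonal n, coeff z.1 (cSeries c) *
          coeff z.2 (coeff k (phatPowSeries c (s + z.1) * phatPowSeries c q)) := by
        rw [sum_comm]
        simp only [coeff_mul, map_sum, coeff_coeff_phatPowSeries, mul_sum]
    _ = coeff n (coeff k (phatPowTail c (s + q))) := by
        simp only [hk, coeff_coeff_phatPowSeries, phatPowTail, coeff_mk, add_right_comm s q]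

theorem phatPowSeries_add (c : ℕ → ℚ) (p q : ℕ) :
    phatPowSeries c (p + q) = phatPowSeries c p * phatPowSeries c q := by
  ext k : 1
  induction k generalizing p q with
  | zero =>
    simp only [coeff_zero_eq_constantCoeff_apply, map_mul, constantCoeff_phatPowSeries, mul_one]
  | succ k ihk =>
    induction p with
    | zero => simp [phatPowSeries_zero]
    | succ p ihp =>
      rw [add_right_comm, phatPowSeries_succ, phatPowSeries_succ, add_mul, map_add, map_add,
        mul_assoc, coeff_succ_X_mul, coeff_succ_X_mul, ihp, add_right_comm,
        coeff_phatPowTail_mul c fun p' => (ihk p' q).symm]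

theorem phatPowSeries_one_pow (c : ℕ → ℚ) (d : ℕ) : phatPowSeries c 1 ^ d = phatPowSeries c d := by
  induction d with
  | zero => rw [pow_zero, phatPowSeries_zero]
  | succ d ih => rw [pow_succ, ih, phatPowSeries_add]

/-- Proposition: `d`-fold convolution formula (case `a = 1`, `b = 2`). -/
theorem phat_dfold_convolution (c : ℕ → ℚ) (d : ℕ) (hd : 1 ≤ d) (n k : ℕ) :
    ∑ ℓs ∈ Finset.Nat.antidiagonalTuple d k,
      ∑ ms ∈ Finset.Nat.antidiagonalTuple d n,
        ∏ i, phat c (ms i) (ℓs i)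
    = ((d : ℚ) / ((n + k + d : ℕ) : ℚ)) * (((n + k + d).choose k : ℕ) : ℚ) * Pc c n k := by
  have hcoeff := congrArg (fun G => coeff n (coeff k G)) (phatPowSeries_one_pow c d)
  simp only [coeff_pow_eq_sum_antidiagonalTuple, map_sum, coeff_prod_fin,
    coeff_coeff_phatPowSeries, phatPow_one] at hcoeff
  rw [hcoeff, phatPow, if_neg (by omega)]
end

section
/- Twofold convolution identity (count of partitions with a triangle over a fixed side): let c : ℕ → ℚ be a sequence and define p̂(m,ℓ) := (1/(m+ℓ+1))·C(m+ℓ+1, ℓ)·P_c(m,ℓ) for m, ℓ ∈ ℕ (so p̂(0,0) = 1 and p̂(m,0) = 0 for m > 0). Then for all n, k ∈ ℕ, ∑_{ℓ=0}^{k} ∑_{m=0}^{n} p̂(n−m, k−ℓ)·p̂(m, ℓ) = (2/(n+2))·C(n+k+1, k)·P_c(n,k). -/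
open Finset

def compositionTuples (k n : ℕ) : Finset (Fin k → ℕ) :=
  (Nat.antidiagonalTuple k n).filter fun f => ∀ i, 0 < f i

section Compositions

variable {k n : ℕ}

theorem mem_compositionTuples {f : Fin k → ℕ} :
    f ∈ compositionTuples k n ↔ ∑ i, f i = n ∧ ∀ i, 0 < f i := by
  simp [compositionTuples, Nat.mem_antidiagonalTuple]

theorem comp_perm_mem_compositionTuples {f : Fin k → ℕ} (σ : Equiv.Perm (Fin k)) :
    f ∘ σ ∈ compositionTuples k n ↔ f ∈ compositionTuples k n := by
  simp only [mem_compositionTuples, Function.comp_apply, Equiv.sum_comp σ f]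
  exact and_congr_right fun _ => ⟨fun h i => by simpa using h (σ.symm i), fun h i => h (σ i)⟩

theorem sum_compositionTuples_succ {M : Type*} [AddCommMonoid M] (F : ℕ → (Fin k → ℕ) → M) :
    ∑ f ∈ compositionTuples (k + 1) n, F (f 0) (Fin.tail f) =
      ∑ j ∈ Icc 1 n, ∑ g ∈ compositionTuples k (n - j), F j g := by
  rw [sum_sigma']
  refine sum_nbij' (fun f => ⟨f 0, Fin.tail f⟩) (fun p => Fin.cons p.1 p.2) ?_ ?_
    (fun f _ => Fin.cons_self_tail f) (fun p _ => by simp) (fun f _ => rfl)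
  · intro f hf
    simp only [mem_sigma, mem_Icc, mem_compositionTuples, Fin.sum_univ_succ] at hf ⊢
    exact ⟨⟨hf.2 0, by omega⟩, by simp only [Fin.tail]; omega, fun i => hf.2 i.succ⟩
  · rintro ⟨j, g⟩ hg
    simp only [mem_sigma, mem_Icc, mem_compositionTuples, Fin.sum_univ_succ] at hg ⊢
    refine ⟨by simp only [Fin.cons_zero, Fin.cons_succ]; omega, Fin.cases ?_ fun i => ?_⟩
    · simp only [Fin.cons_zero]; omega
    · simpa using hg.2.2 i

end Compositions

section WeightedCompositions

variable (c : ℕ → ℚ) (n k : ℕ)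

theorem Pc_eq_sum_compositionTuples : Pc c n k = ∑ f ∈ compositionTuples k n, ∏ i, c (f i) :=
  rfl

theorem Pc_zero_right : Pc c n 0 = if n = 0 then 1 else 0 := by
  rcases eq_or_ne n 0 with rfl | hn
  · simp [Pc, Nat.antidiagonalTuple_zero_zero]
  · obtain ⟨m, rfl⟩ := Nat.exists_eq_succ_of_ne_zero hn
    simp [Pc, Nat.antidiagonalTuple_zero_succ]

theorem sum_mul_prod_compositionTuples_succ (g : ℕ → ℚ) :
    ∑ f ∈ compositionTuples (k + 1) n, g (f 0) * ∏ i, c (f i) =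
      ∑ j ∈ Icc 1 n, g j * c j * Pc c (n - j) k := by
  simp_rw [Fin.prod_univ_succ, Pc_eq_sum_compositionTuples, mul_sum, ← mul_assoc]
  exact sum_compositionTuples_succ fun j h => g j * c j * ∏ i, c (h i)

theorem Pc_succ : Pc c n (k + 1) = ∑ j ∈ Icc 1 n, c j * Pc c (n - j) k := by
  rw [Pc_eq_sum_compositionTuples]
  simpa using sum_mul_prod_compositionTuples_succ c n k 1

theorem sum_apply_mul_prod_compositionTuples_eq (i i' : Fin k) :
    ∑ f ∈ compositionTuples k n, (f i : ℚ) * ∏ j, c (f j) =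
      ∑ f ∈ compositionTuples k n, (f i' : ℚ) * ∏ j, c (f j) := by
  let σ := Equiv.swap i i'
  refine sum_nbij' (· ∘ σ) (· ∘ σ) (fun f hf => (comp_perm_mem_compositionTuples σ).2 hf)
    (fun f hf => (comp_perm_mem_compositionTuples σ).2 hf) (fun f _ => ?_) (fun f _ => ?_)
    fun f _ => ?_
  · ext; simp [σ]
  · ext; simp [σ]
  · simp only [Function.comp_apply, σ, Equiv.swap_apply_right]
    rw [Equiv.prod_comp σ fun j => c (f j)]

theorem card_mul_sum_apply_mul_prod_compositionTuples (i : Fin k) :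
    (k : ℚ) * ∑ f ∈ compositionTuples k n, (f i : ℚ) * ∏ j, c (f j) = n * Pc c n k := by
  calc (k : ℚ) * ∑ f ∈ compositionTuples k n, (f i : ℚ) * ∏ j, c (f j)
      = ∑ i' : Fin k, ∑ f ∈ compositionTuples k n, (f i' : ℚ) * ∏ j, c (f j) := by
        simp [sum_apply_mul_prod_compositionTuples_eq c n k _ i]
    _ = ∑ f ∈ compositionTuples k n, ((∑ i', f i' : ℕ) : ℚ) * ∏ j, c (f j) := by
        rw [sum_comm]; push_cast; simp_rw [sum_mul]
    _ = n * Pc c n k := by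
        rw [Pc_eq_sum_compositionTuples, mul_sum]
        exact sum_congr rfl fun f hf => by rw [(mem_compositionTuples.1 hf).1]

theorem succ_mul_sum_Icc_mul_Pc :
    ((k : ℚ) + 1) * ∑ j ∈ Icc 1 n, (j : ℚ) * c j * Pc c (n - j) k = n * Pc c n (k + 1) := by
  rw [← sum_mul_prod_compositionTuples_succ,
    ← card_mul_sum_apply_mul_prod_compositionTuples c n _ 0]
  push_cast; rfl

end WeightedCompositions

/-- `Phi c t` is `Φ_(t+1)`: at `s = 0` the closed formula is junk (`0`) instead of `δ`. -/
def Phi (c : ℕ → ℚ) (t n k : ℕ) : ℚ :=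
  ((t : ℚ) + 1) / ((n : ℚ) + t + 1) * ((n + k + t).choose k : ℚ) * Pc c n k

section Phi

variable (c : ℕ → ℚ)

theorem Phi_zero_right (t n : ℕ) : Phi c t n 0 = if n = 0 then 1 else 0 := by
  rcases eq_or_ne n 0 with rfl | hn
  · simp [Phi, Pc_zero_right]
    positivity
  · simp [Phi, Pc_zero_right, hn]

theorem phat_eq_Phi_zero : phat c = Phi c 0 := by
  ext m ℓ
  have h := Nat.choose_mul_succ_eq (m + ℓ) ℓ
  rw [show m + ℓ + 1 - ℓ = m + 1 by omega] at h
  have hq : ((m + ℓ).choose ℓ : ℚ) * (m + ℓ + 1) = ((m + ℓ + 1).choose ℓ : ℚ) * (m + 1) := by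
    exact_mod_cast h
  simp only [phat, Phi, Nat.cast_zero, add_zero, Nat.cast_add, Nat.cast_one]
  field_simp
  linear_combination (-Pc c m ℓ) * hq

theorem mul_sum_Icc_mul_Phi (t n k : ℕ) :
    ((n : ℚ) + t + 1) * ((k : ℚ) + 1) * ∑ j ∈ Icc 1 n, c j * Phi c (t + j) (n - j) k =
      ((n + k + t).choose k : ℚ) * ((t + 1) * (k + 1) + n) * Pc c n (k + 1) := by
  have hterm : ∀ j ∈ Icc 1 n, ((n : ℚ) + t + 1) * (c j * Phi c (t + j) (n - j) k) =
      ((n + k + t).choose k : ℚ) *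
        ((t + 1) * (c j * Pc c (n - j) k) + j * c j * Pc c (n - j) k) := by
    intro j hj
    have hjn : j ≤ n := (mem_Icc.1 hj).2
    have hidx : n - j + k + (t + j) = n + k + t := by omega
    have hden : ((n - j : ℕ) : ℚ) + (t + j : ℕ) + 1 = n + t + 1 := by
      push_cast [Nat.cast_sub hjn]; ring
    rw [Phi, hidx, hden]
    field_simp
    push_cast; ring
  calc ((n : ℚ) + t + 1) * ((k : ℚ) + 1) * ∑ j ∈ Icc 1 n, c j * Phi c (t + j) (n - j) k
      = ((k : ℚ) + 1) * ∑ j ∈ Icc 1 n, ((n : ℚ) + t + 1) * (c j * Phi c (t + j) (n - j) k) := by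
        rw [← mul_sum]; ring
    _ = ((n + k + t).choose k : ℚ) * ((k + 1) * (t + 1) * Pc c n (k + 1) +
          (k + 1) * ∑ j ∈ Icc 1 n, (j : ℚ) * c j * Pc c (n - j) k) := by
        rw [sum_congr rfl hterm, ← mul_sum, sum_add_distrib, ← mul_sum, ← Pc_succ]; ring
    _ = ((n + k + t).choose k : ℚ) * ((t + 1) * (k + 1) + n) * Pc c n (k + 1) := by
        rw [succ_mul_sum_Icc_mul_Pc]; ring

theorem Phi_zero_succ (n k : ℕ) :
    Phi c 0 n (k + 1) = ∑ j ∈ Icc 1 n, c j * Phi c j (n - j) k := by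
  have h := mul_sum_Icc_mul_Phi c 0 n k
  simp only [zero_add] at h
  have hC : ((n + k + 1).choose (k + 1) : ℚ) * (k + 1) = (n + k + 1) * (n + k).choose k := by
    exact_mod_cast (Nat.add_one_mul_choose_eq (n + k) k).symm
  have hne : ((n : ℚ) + (0 : ℕ) + 1) * ((k : ℚ) + 1) ≠ 0 := by positivity
  rw [← mul_right_inj' hne, h, Phi]
  simp only [Nat.cast_zero, add_zero, ← add_assoc]
  field_simp
  linear_combination Pc c n (k + 1) * hC

theorem Phi_succ_succ (t n k : ℕ) :
    Phi c (t + 1) n (k + 1) =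
      Phi c t n (k + 1) + ∑ j ∈ Icc 1 n, c j * Phi c (t + 1 + j) (n - j) k := by
  have h := mul_sum_Icc_mul_Phi c (t + 1) n k
  set N := n + k + (t + 1)
  have hC : ((N + 1).choose (k + 1) : ℚ) * (k + 1) = (N + 1) * N.choose k := by
    exact_mod_cast (Nat.add_one_mul_choose_eq N k).symm
  have hC' : (N.choose (k + 1) : ℚ) * (k + 1) = N.choose k * (n + t + 1) := by
    have := Nat.choose_succ_right_eq N k
    rw [show N - k = n + t + 1 by omega] at this
    exact_mod_cast this
  have hk : (k : ℚ) + 1 ≠ 0 := by positivity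
  have hS := eq_div_of_mul_eq (by positivity) ((mul_comm _ _).trans h)
  rw [hS, Phi, Phi, show n + (k + 1) + (t + 1) = N + 1 by omega, show n + (k + 1) + t = N by omega,
    eq_div_of_mul_eq hk hC, eq_div_of_mul_eq hk hC']
  simp only [N]
  push_cast
  field_simp
  ring

end Phi

theorem sum_range_sum_Icc_eq {M : Type*} [AddCommMonoid M] (h : ℕ → ℕ → M) (n : ℕ) :
    ∑ m ∈ range (n + 1), ∑ j ∈ Icc 1 m, h j m =
      ∑ j ∈ Icc 1 n, ∑ m ∈ range (n - j + 1), h j (j + m) := by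
  rw [sum_comm' (t' := Icc 1 n) (s' := fun j => Ico j (n + 1))]
  · refine sum_congr rfl fun j hj => ?_
    rw [sum_Ico_eq_sum_range, show n + 1 - j = n - j + 1 by have := (mem_Icc.1 hj).2; omega]
  · intro m j
    simp only [mem_range, mem_Icc, mem_Ico]
    omega

def conv2 (a b : ℕ → ℕ → ℚ) (n k : ℕ) : ℚ :=
  ∑ ℓ ∈ range (k + 1), ∑ m ∈ range (n + 1), a (n - m) (k - ℓ) * b m ℓ

section Conv2

variable (a : ℕ → ℕ → ℚ) {b : ℕ → ℕ → ℚ} (n k : ℕ)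

theorem sum_range_mul_eq_of_eq_ite {d : ℕ → ℚ} (hd : ∀ m, d m = if m = 0 then 1 else 0)
    (x : ℕ → ℚ) : ∑ m ∈ range (n + 1), x (n - m) * d m = x n := by
  simp [hd]

theorem conv2_zero_right (hb : ∀ m, b m 0 = if m = 0 then 1 else 0) : conv2 a b n 0 = a n 0 := by
  simp only [conv2, zero_add, sum_range_one, Nat.sub_zero]
  exact sum_range_mul_eq_of_eq_ite n hb (a · 0)

theorem conv2_succ_right (hb : ∀ m, b m 0 = if m = 0 then 1 else 0) :
    conv2 a b n (k + 1) = a n (k + 1) + conv2 a (fun m ℓ => b m (ℓ + 1)) n k := by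
  rw [conv2, sum_range_succ', Nat.sub_zero, sum_range_mul_eq_of_eq_ite n hb (a · (k + 1)), add_comm]
  simp only [conv2, Nat.add_sub_add_right]

theorem conv2_add_right (b' : ℕ → ℕ → ℚ) :
    conv2 a (fun m ℓ => b m ℓ + b' m ℓ) n k = conv2 a b n k + conv2 a b' n k := by
  simp only [conv2, mul_add, sum_add_distrib]

theorem conv2_sum_Icc_right (c : ℕ → ℚ) (bs : ℕ → ℕ → ℕ → ℚ) :
    conv2 a (fun m ℓ => ∑ j ∈ Icc 1 m, c j * bs j (m - j) ℓ) n k =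
      ∑ j ∈ Icc 1 n, c j * conv2 a (bs j) (n - j) k := by
  simp only [conv2, mul_sum]
  rw [sum_congr rfl fun ℓ _ => sum_range_sum_Icc_eq _ n, sum_comm]
  refine sum_congr rfl fun j _ => sum_congr rfl fun ℓ _ => sum_congr rfl fun m _ => ?_
  rw [Nat.add_sub_cancel_left, Nat.sub_add_eq]
  ring

end Conv2

theorem conv2_Phi (c : ℕ → ℚ) (t u n k : ℕ) :
    conv2 (Phi c t) (Phi c u) n k = Phi c (t + u + 1) n k := by
  induction k generalizing t u n with
  | zero => rw [conv2_zero_right _ _ (Phi_zero_right c u), Phi_zero_right, Phi_zero_right]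
  | succ k ihk =>
    induction u with
    | zero =>
      rw [conv2_succ_right _ _ _ (Phi_zero_right c 0)]
      simp_rw [Phi_zero_succ]
      rw [conv2_sum_Icc_right, add_zero, Phi_succ_succ]
      simp_rw [ihk, add_right_comm t _ 1]
    | succ u ihu =>
      rw [conv2_succ_right _ _ _ (Phi_zero_right c (u + 1))]
      simp_rw [Phi_succ_succ c u]
      rw [conv2_add_right, conv2_sum_Icc_right, ← add_assoc,
        ← conv2_succ_right _ _ _ (Phi_zero_right c u), ihu, ← add_assoc t u 1,
        Phi_succ_succ c (t + u + 1)]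
      simp_rw [ihk]
      refine congrArg (Phi c (t + u + 1) n (k + 1) + ·) (sum_congr rfl fun j _ => ?_)
      rw [show t + (u + 1 + j) + 1 = t + u + 1 + 1 + j by ring]

/-- Twofold convolution identity: count of partitions with a triangle over a fixed side. -/
theorem phat_twofold_convolution (c : ℕ → ℚ) (n k : ℕ) :
    ∑ ℓ ∈ Finset.range (k + 1), ∑ m ∈ Finset.range (n + 1),
      phat c (n - m) (k - ℓ) * phat c m ℓ
    = (2 / ((n : ℚ) + 2)) * (((n + k + 1).choose k : ℕ) : ℚ) * Pc c n k := by
  have h := conv2_Phi c 0 0 n k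
  rw [← phat_eq_Phi_zero, conv2] at h
  simp only [h, Phi, zero_add]
  push_cast
  ring
end

section
/- Fuss–Catalan evaluation for partitions into (q+2)-gons: let q, m ≥ 1 be integers, t ∈ ℚ, and let c : ℕ → ℚ be the sequence with c_q = t and c_j = 0 for j ≠ q. Then ∑_{k=1}^{qm} (1/k)·C(qm+k, k−1)·P_c(qm, k) = (1/(qm+1))·C((q+1)m, m)·t^m. Moreover, P_c(n,k) = 0 whenever n is not a multiple of q, so the total number of such colored partitions of a convex (n+2)-gon is 0 unless q divides n. -/
lemma Pc_eq (q : ℕ) (hq : 0 < q) (t : ℚ) (c : ℕ → ℚ)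
    (hc : ∀ j, c j = if j = q then t else 0) (n k : ℕ) :
    Pc c n k = if n = q * k then t ^ k else 0 := by
  unfold Pc
  split_ifs with h
  · subst h
    rw [Finset.sum_eq_single_of_mem (fun _ => q)]
    · simp [hc]
    · simp [Finset.mem_filter, Finset.Nat.mem_antidiagonalTuple, hq, mul_comm]
    · intro f hf hne
      obtain ⟨i, hi⟩ : ∃ i, f i ≠ q := by
        by_contra h'; push_neg at h'; exact hne (funext h')
      exact Finset.prod_eq_zero (Finset.mem_univ i) (by rw [hc]; simp [hi])
  · apply Finset.sum_eq_zero
    intro f hf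
    simp only [Finset.mem_filter, Finset.Nat.mem_antidiagonalTuple] at hf
    obtain ⟨i, hi⟩ : ∃ i, f i ≠ q := by
      by_contra h'; push_neg at h'
      exact h (by rw [← hf.1]; simp [h', mul_comm])
    exact Finset.prod_eq_zero (Finset.mem_univ i) (by rw [hc]; simp [hi])

/-- Fuss–Catalan evaluation for colored partitions into `(q+2)`-gons. -/
theorem fuss_catalan_q_gons (q m : ℕ) (hq : 1 ≤ q) (hm : 1 ≤ m) (t : ℚ)
    (c : ℕ → ℚ) (hc : ∀ j, c j = if j = q then t else 0) :
    (∑ k ∈ Finset.Icc 1 (q * m),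
        (1 / (k : ℚ)) * (((q * m + k).choose (k - 1) : ℕ) : ℚ) * Pc c (q * m) k
      = (1 / ((q * m : ℚ) + 1)) * ((((q + 1) * m).choose m : ℕ) : ℚ) * t ^ m) ∧
    (∀ n k : ℕ, ¬ q ∣ n → Pc c n k = 0) := by
  have hq0 : 0 < q := hq
  constructor
  · rw [Finset.sum_eq_single_of_mem m]
    · rw [Pc_eq q hq0 t c hc, if_pos rfl]
      have key : ((q*m+m).choose m) * m = ((q*m+m).choose (m-1)) * (q*m+1) := by
        have h1 := Nat.choose_succ_right_eq (q*m+m) (m-1)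
        have h2 : m - 1 + 1 = m := by omega
        have h3 : q*m+m - (m-1) = q*m+1 := by omega
        rw [h2, h3] at h1
        exact h1
      have hm0 : (m:ℚ) ≠ 0 := by positivity
      have hd : ((q*m:ℚ)) + 1 ≠ 0 := by positivity
      have hN : (q+1)*m = q*m+m := by ring
      rw [hN]
      field_simp
      have := congrArg (fun x : ℕ => (x : ℚ)) key
      push_cast at this
      linear_combination (-(t ^ m)) * this
    · simp only [Finset.mem_Icc]
      exact ⟨hm, Nat.le_mul_of_pos_left m hq0⟩
    · intro k hk hne
      rw [Pc_eq q hq0 t c hc, if_neg, mul_zero]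
      intro h
      exact hne (Nat.eq_of_mul_eq_mul_left hq0 h).symm
  · intro n k hdvd
    rw [Pc_eq q hq0 t c hc, if_neg]
    intro h
    exact hdvd ⟨k, h⟩
end
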